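/- A scheme satisfying the property (AF) (every finite subset of points is contained in an affine open) is separated. -/

import Mathlib

/-! Separatedness of `X` means that the diagonal `X ⟶ X ×ₛ X` is a closed immersion, which is
local on `X ×ₛ X`. Any point of `X ×ₛ X` has both projections in a common affine open `U`, so it
lies in the open `U ×ₛ U`, over which the diagonal of `X` restricts to the diagonal of the affine
scheme `U`: a closed immersion. -/

open AlgebraicGeometry CategoryTheory Limits

namespace AlgebraicGeometry

open Scheme Pullback

universe u

variable {X Y : Scheme.{u}} (f : X ⟶ Y)

lemma isSeparated_of_forall_exists_mem_range (𝒰 : OpenCover.{u} Y)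
    (𝒱 : ∀ i, OpenCover.{u} ((𝒰.pullback₁ f).X i)) [∀ i, IsAffine (𝒰.X i)]
    [∀ i j, IsAffine ((𝒱 i).X j)]
    (h : ∀ x y, f x = f y → ∃ (i : 𝒰.I₀) (j : (𝒱 i).I₀),
      x ∈ Set.range ((𝒱 i).f j ≫ (𝒰.pullback₁ f).f i) ∧
      y ∈ Set.range ((𝒱 i).f j ≫ (𝒰.pullback₁ f).f i)) :
    IsSeparated f := by
  have hcover : diagonalCoverDiagonalRange f 𝒰 𝒱 = ⊤ := by
    refine top_le_iff.mp fun z _ ↦ ?_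
    obtain ⟨i, j, hz⟩ := h (pullback.fst f f z) (pullback.snd f f z) (by
      rw [← Scheme.Hom.comp_apply, ← Scheme.Hom.comp_apply, pullback.condition])
    refine TopologicalSpace.Opens.mem_iSup.mpr ⟨⟨i, j⟩, ?_⟩
    change z ∈ Set.range _
    erw [diagonalCover_map, range_map (i₃ := 𝒰.f i)]
    exact hz
  constructor
  refine IsZariskiLocalAtTarget.of_iSup_eq_top (fun _ : PUnit.{0} ↦ ⊤) (by simp) fun _ ↦ ?_
  rw [← hcover]
  -- the lemma indexes by `𝒰.I₀`, which matches `(𝒰.pullback₁ f).I₀` only after unfolding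
  exact @isClosedImmersion_diagonal_restrict_diagonalCoverDiagonalRange _ _ f 𝒰 𝒱 ‹_› ‹_›

lemma isSeparated_of_forall_exists_isAffineOpen [IsAffine Y]
    (h : ∀ x y, f x = f y → ∃ U : X.Opens, IsAffineOpen U ∧ x ∈ U ∧ y ∈ U) :
    IsSeparated f := by
  let 𝒰 : OpenCover.{u} Y := coverOfIsIso (𝟙 Y)
  have : ∀ i, IsAffine (𝒰.X i) := fun _ ↦ inferInstanceAs (IsAffine Y)
  have : ∀ i, IsIso ((𝒰.pullback₁ f).f i) := fun _ ↦
    inferInstanceAs (IsIso (pullback.fst f (𝟙 Y)))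
  -- the affine opens of `X`, transported along `X ×_Y Y ≅ X`
  let 𝒱 (i) : OpenCover.{u} ((𝒰.pullback₁ f).X i) :=
    (X.openCoverOfIsOpenCover _ (iSup_affineOpens_eq_top X)).pushforwardIso
      (inv ((𝒰.pullback₁ f).f i))
  have : ∀ i j, IsAffine ((𝒱 i).X j) := fun _ j ↦ (show X.affineOpens from j).2
  have hrange (i) (U : X.affineOpens) :
      Set.range ((𝒱 i).f U ≫ (𝒰.pullback₁ f).f i) = U.1 := by
    change Set.range ((U.1.ι ≫ inv ((𝒰.pullback₁ f).f i)) ≫ _) = _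
    simp
  refine isSeparated_of_forall_exists_mem_range f 𝒰 𝒱 fun x y hxy ↦ ?_
  obtain ⟨U, hU, hx, hy⟩ := h x y hxy
  let i : (𝒰.pullback₁ f).I₀ := ⟨⟩
  let V : X.affineOpens := ⟨U, hU⟩
  exact ⟨i, V, by rw [hrange]; exact ⟨hx, hy⟩⟩

end AlgebraicGeometry

theorem stmt_15 (X : Scheme)
    (hAF : ∀ s : Set X, s.Finite →
      ∃ U : X.Opens, IsAffineOpen U ∧ s ⊆ ↑U) :
    X.IsSeparated := by
  refine ⟨isSeparated_of_forall_exists_isAffineOpen _ fun x y _ ↦ ?_⟩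
  obtain ⟨U, hU, hxy⟩ := hAF {x, y} (Set.toFinite _)
  exact ⟨U, hU, hxy (by simp), hxy (by simp)⟩
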